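/- For every d ∈ (0,1) and every integer k ≥ 1, the WENO-PM_k mapping function is monotonically non-decreasing on [0,1]: for all 0 ≤ ω₁ ≤ ω₂ ≤ 1, g(ω₁) ≤ g(ω₂). (Indeed its derivative equals ((k+1)(k+2)/d^{k+1})·ω(d−ω)^k ≥ 0 on [0,d] and ((k+1)(k+2)/(1−d)^{k+1})·(ω−d)^k(1−ω) ≥ 0 on [d,1].) -/

import Mathlib

/-- The left branch (ω ≤ d) of the WENO-PMₖ mapping function. -/
noncomputable def gPML (d : ℝ) (k : ℕ) (ω : ℝ) : ℝ :=
  ((-1 : ℝ) ^ k * ((k : ℝ) + 1) / d ^ (k + 1)) * (ω - d) ^ (k + 1) * (ω + d / ((k : ℝ) + 1)) + d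

/-- The right branch (ω > d) of the WENO-PMₖ mapping function. -/
noncomputable def gPMR (d : ℝ) (k : ℕ) (ω : ℝ) : ℝ :=
  (-((k : ℝ) + 1) / (1 - d) ^ (k + 1)) * (ω - d) ^ (k + 1) *
    (ω + (d - ((k : ℝ) + 2)) / ((k : ℝ) + 1)) + d

/-- The WENO-PMₖ mapping function. -/
noncomputable def gPM (d : ℝ) (k : ℕ) (ω : ℝ) : ℝ :=
  if ω ≤ d then gPML d k ω else gPMR d k ω

/-! Both branches have the form `c (ω - d)^(k+1) (ω + e) + d`, whose derivative
`c (ω - d)^k ((k+2) ω + (k+1) e - d)` factors, for the two choices of `c` and `e`, into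
`(k+1)(k+2)/d^(k+1) · ω (d - ω)^k` and `(k+1)(k+2)/(1-d)^(k+1) · (ω - d)^k (1 - ω)`. These are
nonnegative on `[0, d]` and `[d, 1]` respectively, and both branches take the value `d` at
`ω = d`, so the glued function is monotone. -/

open Set

theorem MonotoneOn.ite_Icc {α β : Type*} [LinearOrder α] [Preorder β] {f g : α → β}
    {a b c : α} (hf : MonotoneOn f (Icc a b)) (hg : MonotoneOn g (Icc b c))
    (hfg : f b = g b) :
    MonotoneOn (fun x ↦ if x ≤ b then f x else g x) (Icc a c) := by
  intro x hx y hy hxy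
  by_cases hyb : y ≤ b
  · have hxb : x ≤ b := hxy.trans hyb
    simpa only [hxb, hyb, if_true] using hf ⟨hx.1, hxb⟩ ⟨hy.1, hyb⟩ hxy
  · have hby : b ≤ y := le_of_not_ge hyb
    simp only [hyb, if_false]
    by_cases hxb : x ≤ b
    · simp only [hxb, if_true]
      calc f x ≤ f b := hf ⟨hx.1, hxb⟩ ⟨hx.1.trans hxb, le_rfl⟩ hxb
        _ = g b := hfg
        _ ≤ g y := hg ⟨le_rfl, hby.trans hy.2⟩ ⟨hby, hy.2⟩ hby
    · simp only [hxb, if_false]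
      exact hg ⟨le_of_not_ge hxb, hx.2⟩ ⟨hby, hy.2⟩ hxy

theorem hasDerivAt_mul_sub_pow_succ_mul_add (c d e : ℝ) (k : ℕ) (ω : ℝ) :
    HasDerivAt (fun x ↦ c * (x - d) ^ (k + 1) * (x + e) + d)
      (c * (ω - d) ^ k * (((k : ℝ) + 2) * ω + ((k : ℝ) + 1) * e - d)) ω := by
  have hpow : HasDerivAt (fun x ↦ (x - d) ^ (k + 1)) (((k : ℝ) + 1) * (ω - d) ^ k) ω := by
    simpa using ((hasDerivAt_id ω).sub_const d).fun_pow (k + 1)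
  have h := ((hpow.const_mul c).fun_mul ((hasDerivAt_id' ω).add_const e)).add_const d
  exact h.congr_deriv (by ring)

theorem hasDerivAt_gPML (d : ℝ) (k : ℕ) (ω : ℝ) :
    HasDerivAt (gPML d k)
      (((k : ℝ) + 1) * ((k : ℝ) + 2) / d ^ (k + 1) * ω * (d - ω) ^ k) ω := by
  refine (hasDerivAt_mul_sub_pow_succ_mul_add ((-1) ^ k * ((k : ℝ) + 1) / d ^ (k + 1)) d
    (d / ((k : ℝ) + 1)) k ω).congr_deriv ?_
  have hk : (k : ℝ) + 1 ≠ 0 := by positivity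
  have hsign : (-1 : ℝ) ^ k * (ω - d) ^ k = (d - ω) ^ k := by rw [← mul_pow]; ring
  rw [mul_div_cancel₀ d hk, ← hsign]
  ring

theorem hasDerivAt_gPMR (d : ℝ) (k : ℕ) (ω : ℝ) :
    HasDerivAt (gPMR d k)
      (((k : ℝ) + 1) * ((k : ℝ) + 2) / (1 - d) ^ (k + 1) * (ω - d) ^ k * (1 - ω)) ω := by
  refine (hasDerivAt_mul_sub_pow_succ_mul_add (-((k : ℝ) + 1) / (1 - d) ^ (k + 1)) d
    ((d - ((k : ℝ) + 2)) / ((k : ℝ) + 1)) k ω).congr_deriv ?_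
  have hk : (k : ℝ) + 1 ≠ 0 := by positivity
  rw [mul_div_cancel₀ _ hk]
  ring

theorem monotoneOn_gPML (d : ℝ) (k : ℕ) : MonotoneOn (gPML d k) (Icc 0 d) := by
  refine monotoneOn_of_hasDerivWithinAt_nonneg (convex_Icc 0 d)
    (fun x _ ↦ (hasDerivAt_gPML d k x).continuousAt.continuousWithinAt)
    (fun x _ ↦ (hasDerivAt_gPML d k x).hasDerivWithinAt) ?_
  intro x hx
  rw [interior_Icc] at hx
  obtain ⟨hx0, hxd⟩ := hx
  have hd : 0 < d := hx0.trans hxd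
  have hdx : 0 ≤ d - x := sub_nonneg.2 hxd.le
  positivity

theorem monotoneOn_gPMR (d : ℝ) (k : ℕ) : MonotoneOn (gPMR d k) (Icc d 1) := by
  refine monotoneOn_of_hasDerivWithinAt_nonneg (convex_Icc d 1)
    (fun x _ ↦ (hasDerivAt_gPMR d k x).continuousAt.continuousWithinAt)
    (fun x _ ↦ (hasDerivAt_gPMR d k x).hasDerivWithinAt) ?_
  intro x hx
  rw [interior_Icc] at hx
  obtain ⟨hdx, hx1⟩ := hx
  have hd : 0 < 1 - d := sub_pos.2 (hdx.trans hx1)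
  have hxd : 0 ≤ x - d := sub_nonneg.2 hdx.le
  have hx : 0 ≤ 1 - x := sub_nonneg.2 hx1.le
  positivity

theorem gPML_self (d : ℝ) (k : ℕ) : gPML d k d = d := by
  simp [gPML]

theorem gPMR_self (d : ℝ) (k : ℕ) : gPMR d k d = d := by
  simp [gPMR]

theorem wenoPM_monotone_general (d : ℝ) (k : ℕ) :
    MonotoneOn (gPM d k) (Set.Icc (0 : ℝ) 1) :=
  (monotoneOn_gPML d k).ite_Icc (monotoneOn_gPMR d k) (by rw [gPML_self, gPMR_self])

/-- For every `d ∈ (0,1)` and integer `k ≥ 1`, the WENO-PMₖ mapping function is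
monotonically non-decreasing on `[0,1]`: for all `0 ≤ ω₁ ≤ ω₂ ≤ 1`, `g(ω₁) ≤ g(ω₂)`. -/
theorem wenoPM_monotone (d : ℝ) (hd : d ∈ Set.Ioo (0 : ℝ) 1) (k : ℕ) (hk : 1 ≤ k) :
    MonotoneOn (gPM d k) (Set.Icc (0 : ℝ) 1) :=
  wenoPM_monotone_general d k
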